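/- Let U ⊆ ℂ ≅ ℝ² be open and let a, b, c : U → ℂ be smooth functions. For λ ∈ ℂ with |λ| = 1, define the matrix-valued functions A_λ = [[a, b/λ],[c/λ, −a]] and B_λ = [[−conj(a), λ·conj(c)],[λ·conj(b), conj(a)]] on U. Then the zero-curvature equation ∂B_λ/∂z − ∂A_λ/∂z̄ + A_λ·B_λ − B_λ·A_λ = 0 holds on U for every λ with |λ| = 1 if and only if the three equations ∂c/∂z̄ + 2·conj(a)·c = 0, ∂b/∂z̄ − 2·conj(a)·b = 0, and ∂a/∂z̄ + ∂(conj a)/∂z − b·conj(b) + c·conj(c) = 0 hold on U. -/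

import Mathlib

open Matrix Complex

noncomputable section

abbrev M2 := Matrix (Fin 2) (Fin 2) ℂ

/-- Wirtinger derivative `∂f/∂z = (1/2)(∂f/∂x − i·∂f/∂y)`. -/
def wZ (f : ℂ → ℂ) (z : ℂ) : ℂ :=
  (1 / 2) * (fderiv ℝ f z 1 - Complex.I * fderiv ℝ f z Complex.I)

/-- Wirtinger derivative `∂f/∂z̄ = (1/2)(∂f/∂x + i·∂f/∂y)`. -/
def wZbar (f : ℂ → ℂ) (z : ℂ) : ℂ :=
  (1 / 2) * (fderiv ℝ f z 1 + Complex.I * fderiv ℝ f z Complex.I)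

/-- Entrywise Wirtinger derivative `∂M/∂z` of a matrix-valued function. -/
def mwZ (M : ℂ → M2) (z : ℂ) : M2 := Matrix.of fun i j => wZ (fun w => M w i j) z

/-- Entrywise Wirtinger derivative `∂M/∂z̄` of a matrix-valued function. -/
def mwZbar (M : ℂ → M2) (z : ℂ) : M2 := Matrix.of fun i j => wZbar (fun w => M w i j) z

/-- `A_λ = [[a, b/λ],[c/λ, −a]]`. -/
def Amat (a b c : ℂ → ℂ) (lam z : ℂ) : M2 :=
  !![a z, b z / lam; c z / lam, -(a z)]

/-- `B_λ = [[−conj a, λ·conj c],[λ·conj b, conj a]]`. -/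
def Bmat (a b c : ℂ → ℂ) (lam z : ℂ) : M2 :=
  !![-((starRingEnd ℂ) (a z)), lam * (starRingEnd ℂ) (c z);
     lam * (starRingEnd ℂ) (b z), (starRingEnd ℂ) (a z)]

lemma wZ_neg (f : ℂ → ℂ) (z : ℂ) : wZ (fun w => -(f w)) z = -wZ f z := by
  simp [wZ, fderiv_neg]; ring

lemma wZbar_neg (f : ℂ → ℂ) (z : ℂ) : wZbar (fun w => -(f w)) z = -wZbar f z := by
  simp [wZbar, fderiv_neg]; ring

lemma wZ_const_mul (f : ℂ → ℂ) (k z : ℂ) (hf : DifferentiableAt ℝ f z) :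
    wZ (fun w => k * f w) z = k * wZ f z := by
  simp [wZ, fderiv_const_mul hf k]; ring

lemma wZbar_const_mul (f : ℂ → ℂ) (k z : ℂ) (hf : DifferentiableAt ℝ f z) :
    wZbar (fun w => k * f w) z = k * wZbar f z := by
  simp [wZbar, fderiv_const_mul hf k]; ring

lemma wZbar_div_const (f : ℂ → ℂ) (k z : ℂ) (hf : DifferentiableAt ℝ f z) :
    wZbar (fun w => f w / k) z = wZbar f z / k := by
  have : (fun w => f w / k) = fun w => k⁻¹ * f w := by
    funext w; rw [div_eq_mul_inv, mul_comm]
  rw [this, wZbar_const_mul f k⁻¹ z hf, div_eq_mul_inv, mul_comm]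

lemma fderiv_conj_apply (f : ℂ → ℂ) (z v : ℂ) :
    fderiv ℝ (fun w => (starRingEnd ℂ) (f w)) z v = (starRingEnd ℂ) (fderiv ℝ f z v) := by
  have h : (fun w => (starRingEnd ℂ) (f w)) = ⇑Complex.conjCLE ∘ f := rfl
  rw [h, ContinuousLinearEquiv.comp_fderiv]
  simp

lemma wZ_conj (f : ℂ → ℂ) (z : ℂ) :
    wZ (fun w => (starRingEnd ℂ) (f w)) z = (starRingEnd ℂ) (wZbar f z) := by
  simp only [wZ, wZbar, fderiv_conj_apply, _root_.map_mul, _root_.map_add, map_sub, map_div₀,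
    _root_.map_one, map_ofNat, Complex.conj_I]
  ring

lemma zero_curvature_key (a b c : ℂ → ℂ) (lam z : ℂ) (hlam : lam ≠ 0)
    (da : DifferentiableAt ℝ a z) (db : DifferentiableAt ℝ b z) (dc : DifferentiableAt ℝ c z) :
    mwZ (Bmat a b c lam) z - mwZbar (Amat a b c lam) z
      + Amat a b c lam z * Bmat a b c lam z - Bmat a b c lam z * Amat a b c lam z
    = !![ -(wZbar a z + wZ (fun w => (starRingEnd ℂ) (a w)) z
            - b z * (starRingEnd ℂ) (b z) + c z * (starRingEnd ℂ) (c z)),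
          lam * (starRingEnd ℂ) (wZbar c z + 2 * (starRingEnd ℂ) (a z) * c z)
            - (wZbar b z - 2 * (starRingEnd ℂ) (a z) * b z) / lam ;
          lam * (starRingEnd ℂ) (wZbar b z - 2 * (starRingEnd ℂ) (a z) * b z)
            - (wZbar c z + 2 * (starRingEnd ℂ) (a z) * c z) / lam,
          wZbar a z + wZ (fun w => (starRingEnd ℂ) (a w)) z
            - b z * (starRingEnd ℂ) (b z) + c z * (starRingEnd ℂ) (c z) ] := by
  have dac : DifferentiableAt ℝ (fun w => (starRingEnd ℂ) (a w)) z :=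
    Complex.conjCLE.differentiableAt.comp z da
  have dbc : DifferentiableAt ℝ (fun w => (starRingEnd ℂ) (b w)) z :=
    Complex.conjCLE.differentiableAt.comp z db
  have dcc : DifferentiableAt ℝ (fun w => (starRingEnd ℂ) (c w)) z :=
    Complex.conjCLE.differentiableAt.comp z dc
  ext i j
  fin_cases i <;> fin_cases j <;>
    simp only [Fin.zero_eta, Fin.mk_one, mwZ, mwZbar, Amat, Bmat, Matrix.of_apply,
      Matrix.cons_val', Matrix.cons_val_zero,
      Matrix.cons_val_one, Matrix.head_cons, Matrix.head_fin_const, Matrix.empty_val',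
      Matrix.cons_val_fin_one, Matrix.mul_apply, Fin.sum_univ_two, Matrix.sub_apply,
      Matrix.add_apply, Fin.isValue] <;>
    simp only [wZ_neg, wZbar_neg, wZ_const_mul _ lam z dcc, wZ_const_mul _ lam z dbc,
      wZbar_div_const _ lam z db, wZbar_div_const _ lam z dc, wZ_conj] <;>
    (try simp only [_root_.map_add, _root_.map_mul, map_sub, map_ofNat, Complex.conj_conj]) <;>
    (try field_simp) <;> ring

theorem zero_curvature_iff (U : Set ℂ) (hU : IsOpen U) (a b c : ℂ → ℂ)
    (ha : ContDiffOn ℝ (⊤ : ℕ∞) a U) (hb : ContDiffOn ℝ (⊤ : ℕ∞) b U) (hc : ContDiffOn ℝ (⊤ : ℕ∞) c U) :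
    (∀ lam : ℂ, ‖lam‖ = 1 → ∀ z ∈ U,
      mwZ (Bmat a b c lam) z - mwZbar (Amat a b c lam) z
        + Amat a b c lam z * Bmat a b c lam z
        - Bmat a b c lam z * Amat a b c lam z = 0)
    ↔ (∀ z ∈ U,
        wZbar c z + 2 * (starRingEnd ℂ) (a z) * c z = 0 ∧
        wZbar b z - 2 * (starRingEnd ℂ) (a z) * b z = 0 ∧
        wZbar a z + wZ (fun w => (starRingEnd ℂ) (a w)) z
          - b z * (starRingEnd ℂ) (b z) + c z * (starRingEnd ℂ) (c z) = 0) := by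
  have hda : ∀ z ∈ U, DifferentiableAt ℝ a z := fun z hz =>
    (ha.contDiffAt (hU.mem_nhds hz)).differentiableAt (by simp)
  have hdb : ∀ z ∈ U, DifferentiableAt ℝ b z := fun z hz =>
    (hb.contDiffAt (hU.mem_nhds hz)).differentiableAt (by simp)
  have hdc : ∀ z ∈ U, DifferentiableAt ℝ c z := fun z hz =>
    (hc.contDiffAt (hU.mem_nhds hz)).differentiableAt (by simp)
  constructor
  · intro h z hz
    have da := hda z hz; have db := hdb z hz; have dc := hdc z hz
    have h1 := h 1 (by simp) z hz
    have h2 := h Complex.I (by simp) z hz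
    rw [zero_curvature_key a b c 1 z one_ne_zero da db dc] at h1
    rw [zero_curvature_key a b c Complex.I z Complex.I_ne_zero da db dc] at h2
    have q1 : (starRingEnd ℂ) (wZbar c z + 2 * (starRingEnd ℂ) (a z) * c z)
        - (wZbar b z - 2 * (starRingEnd ℂ) (a z) * b z) = 0 := by
      have := congrFun (congrFun h1 0) 1
      simpa using this
    have q2 : Complex.I * (starRingEnd ℂ) (wZbar c z + 2 * (starRingEnd ℂ) (a z) * c z)
        - (wZbar b z - 2 * (starRingEnd ℂ) (a z) * b z) / Complex.I = 0 := by
      have := congrFun (congrFun h2 0) 1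
      simpa using this
    have q3 : (starRingEnd ℂ) (wZbar c z + 2 * (starRingEnd ℂ) (a z) * c z)
        + (wZbar b z - 2 * (starRingEnd ℂ) (a z) * b z) = 0 := by
      rw [Complex.div_I] at q2
      apply mul_left_cancel₀ Complex.I_ne_zero
      rw [mul_zero]
      linear_combination q2
    have hE2 : wZbar b z - 2 * (starRingEnd ℂ) (a z) * b z = 0 := by
      linear_combination (1/2 : ℂ) * q3 - (1/2 : ℂ) * q1
    have hE1 : wZbar c z + 2 * (starRingEnd ℂ) (a z) * c z = 0 := by
      have hc0 : (starRingEnd ℂ) (wZbar c z + 2 * (starRingEnd ℂ) (a z) * c z) = 0 := by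
        linear_combination (1/2 : ℂ) * q3 + (1/2 : ℂ) * q1
      simpa using congrArg (starRingEnd ℂ) hc0
    have hE3 : wZbar a z + wZ (fun w => (starRingEnd ℂ) (a w)) z
        - b z * (starRingEnd ℂ) (b z) + c z * (starRingEnd ℂ) (c z) = 0 := by
      have := congrFun (congrFun h1 1) 1
      simpa using this
    exact ⟨hE1, hE2, hE3⟩
  · intro h lam hlam z hz
    have hl0 : lam ≠ 0 := by
      intro h0; rw [h0] at hlam; simp at hlam
    obtain ⟨e1, e2, e3⟩ := h z hz
    rw [zero_curvature_key a b c lam z hl0 (hda z hz) (hdb z hz) (hdc z hz)]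
    ext i j
    fin_cases i <;> fin_cases j <;> simp [e1, e2, e3]
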